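/- Let ε ∈ (0,1) and u ∈ H¹(Ω_ε)³ with div u = 0 in Ω_ε and u·n_ε = 0 on ∂Ω_ε. For k ∈ ℤ_{≥0}, the tangential component of the weighted average, M_{ε,τ}^k u := P M_ε^k u, satisfies div_{S²}(M_{ε,τ}^k u) = (k−1) M_ε^k(u·n̄) on S². In particular for k = 1, M_{ε,τ}^1 u is surface divergence-free. -/

import Mathlib

open MeasureTheory Matrix
open scoped RealInnerProductSpace

noncomputable section

abbrev E3 : Type := EuclideanSpace ℝ (Fin 3)

def proj3 (y : E3) : Matrix (Fin 3) (Fin 3) ℝ :=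
  Matrix.of fun i j => (if i = j then (1:ℝ) else 0) - y i * y j

def pd (f : E3 → ℝ) (x : E3) (i : Fin 3) : ℝ :=
  fderiv ℝ f x (EuclideanSpace.single i 1)

def gradM (u : E3 → E3) (x : E3) : Matrix (Fin 3) (Fin 3) ℝ :=
  Matrix.of fun i j => fderiv ℝ (fun z => u z j) x (EuclideanSpace.single i 1)

def symM (A : Matrix (Fin 3) (Fin 3) ℝ) : Matrix (Fin 3) (Fin 3) ℝ :=
  (1/2 : ℝ) • (A + Aᵀ)

def tgradM (u : E3 → E3) (y : E3) : Matrix (Fin 3) (Fin 3) ℝ :=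
  proj3 y * gradM u y

def strainS (u : E3 → E3) (y : E3) : Matrix (Fin 3) (Fin 3) ℝ :=
  proj3 y * symM (tgradM u y) * proj3 y

def vE (v : E3 → E3) (x : E3) : E3 := ‖x‖ • v (‖x‖⁻¹ • x)

def ra (a : E3) : E3 → E3 := fun x => WithLp.toLp 2 (crossProduct a x)

def shell (ε : ℝ) : Set E3 := {x : E3 | 1 < ‖x‖ ∧ ‖x‖ < 1 + ε}

def sphM : Measure E3 := (Measure.hausdorffMeasure 2 : Measure E3).restrict (Metric.sphere (0:E3) 1)

def avg (ε : ℝ) (k : ℕ) (φ : E3 → ℝ) (y : E3) : ℝ :=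
  (1/ε) * ∫ r in (1:ℝ)..(1+ε), φ (r • y) * r ^ k

def avgV (ε : ℝ) (k : ℕ) (u : E3 → E3) (y : E3) : E3 :=
  WithLp.toLp 2 (fun j => (1/ε) * ∫ r in (1:ℝ)..(1+ε), u (r • y) j * r ^ k)

def div3 (u : E3 → E3) (x : E3) : ℝ :=
  ∑ i, fderiv ℝ (fun z => u z i) x (EuclideanSpace.single i 1)

def sdiv (F : E3 → E3) (y : E3) : ℝ :=
  ∑ j, ∑ i, proj3 y j i * fderiv ℝ (fun x => F (‖x‖⁻¹ • x) j) y (EuclideanSpace.single i 1)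

def frob2 (A : Matrix (Fin 3) (Fin 3) ℝ) : ℝ := ∑ i, ∑ j, (A i j)^2

/-!
On the unit sphere `sdiv` is the trace of the derivative along tangent directions, so the
product rule for `P z = I - z ⊗ z` gives `div_{S²}(P v) = div_{S²} v - 2 v·n`, since `tr P = 2`
and `P n = 0`. For the radial average `M = M_ε^k u` the tangential divergence is
`div M - n·∂_n M`. Differentiating under the integral, `div M = M_ε^{k+1}(div u) = 0`, while
`n·∂_n M` is `M_ε^{k+1}` of the radial derivative of `u·n`; integrating by parts against
`r^{k+1}` turns it into `-(k+1) M_ε^k(u·n)`, the boundary terms vanishing because `u·n = 0` on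
both spheres. Hence `div_{S²}(P M) = (k + 1 - 2) M_ε^k(u·n)`.
-/

section RadialProjection

variable {E : Type*} [NormedAddCommGroup E] [InnerProductSpace ℝ E]

theorem hasFDerivAt_norm_of_ne_zero {x : E} (hx : x ≠ 0) :
    HasFDerivAt (fun z : E => ‖z‖) (‖x‖⁻¹ • innerSL ℝ x) x := by
  have hsqrt : HasDerivAt Real.sqrt (1 / (2 * Real.sqrt (‖x‖ ^ 2))) (‖x‖ ^ 2) :=
    Real.hasDerivAt_sqrt (by positivity)
  have h := hsqrt.comp_hasFDerivAt x (hasStrictFDerivAt_norm_sq x).hasFDerivAt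
  simp only [Function.comp_def, Real.sqrt_sq (norm_nonneg _)] at h
  refine h.congr_fderiv ?_
  ext v
  have hx' : ‖x‖ ≠ 0 := norm_ne_zero_iff.mpr hx
  simp only [_root_.smul_apply, innerSL_apply_apply, nsmul_eq_mul, smul_eq_mul, Nat.cast_ofNat]
  field_simp

theorem hasFDerivAt_inv_norm_smul {y : E} (hy : ‖y‖ = 1) :
    HasFDerivAt (fun x : E => ‖x‖⁻¹ • x)
      (ContinuousLinearMap.id ℝ E - (innerSL ℝ y).smulRight y) y := by
  have hy0 : y ≠ 0 := norm_ne_zero_iff.mp (by rw [hy]; exact one_ne_zero)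
  have hinv := (hasDerivAt_inv (by rwa [norm_ne_zero_iff])).comp_hasFDerivAt y
    (hasFDerivAt_norm_of_ne_zero hy0)
  refine (hinv.smul (hasFDerivAt_id y)).congr_fderiv ?_
  ext v
  simp [hy, sub_eq_add_neg]

end RadialProjection

section RadialIntegral

variable {E : Type*} [NormedAddCommGroup E] [NormedSpace ℝ E] [ProperSpace E]

theorem hasFDerivAt_integral_comp_smul_mul_pow {f : E → ℝ} (hf : ContDiff ℝ 1 f)
    (a b : ℝ) (k : ℕ) (y : E) :
    HasFDerivAt (fun z => ∫ r in a..b, f (r • z) * r ^ k)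
      (∫ r in a..b, r ^ (k + 1) • fderiv ℝ f (r • y)) y := by
  have hF : ∀ x : E, Continuous fun r : ℝ => f (r • x) * r ^ k := fun x =>
    (hf.continuous.comp (continuous_id.smul continuous_const)).mul (continuous_pow k)
  have hF' : Continuous fun p : ℝ × E => p.1 ^ (k + 1) • fderiv ℝ f (p.1 • p.2) :=
    (continuous_fst.pow _).smul
      ((hf.continuous_fderiv one_ne_zero).comp (continuous_fst.smul continuous_snd))
  obtain ⟨C, hC⟩ := (isCompact_uIcc.prod (isCompact_closedBall y 1)).exists_bound_of_continuousOn
    hF'.continuousOn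
  refine intervalIntegral.hasFDerivAt_integral_of_dominated_of_fderiv_le
    (F' := fun x r => r ^ (k + 1) • fderiv ℝ f (r • x)) (bound := fun _ => C)
    (Metric.ball_mem_nhds y zero_lt_one) (Filter.Eventually.of_forall fun x =>
      (hF x).aestronglyMeasurable.restrict) ((hF y).intervalIntegrable _ _)
    (hF'.comp (continuous_id.prodMk continuous_const)).aestronglyMeasurable.restrict ?_
    intervalIntegrable_const ?_
  · filter_upwards with r hr x hx
    exact hC (r, x) ⟨Set.uIoc_subset_uIcc hr, Metric.ball_subset_closedBall hx⟩
  · filter_upwards with r _ x _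
    have hd := (hf.differentiable one_ne_zero (r • x)).hasFDerivAt.comp x
      ((r • ContinuousLinearMap.id ℝ E).hasFDerivAt (x := x))
    refine (hd.mul_const (r ^ k)).congr_fderiv ?_
    ext v
    simp only [ContinuousLinearMap.comp_smulₛₗ, Real.ringHom_apply, ContinuousLinearMap.comp_id,
      _root_.smul_apply, smul_eq_mul, pow_succ]
    ring

end RadialIntegral

theorem hasFDerivAt_avg {f : E3 → ℝ} (hf : ContDiff ℝ 1 f) (ε : ℝ) (k : ℕ) (y : E3) :
    HasFDerivAt (avg ε k f)
      ((1 / ε) • ∫ r in (1 : ℝ)..(1 + ε), r ^ (k + 1) • fderiv ℝ f (r • y)) y :=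
  (hasFDerivAt_integral_comp_smul_mul_pow hf 1 (1 + ε) k y).const_smul (1 / ε)

theorem fderiv_avg_apply {f : E3 → ℝ} (hf : ContDiff ℝ 1 f) (ε : ℝ) (k : ℕ) (y v : E3) :
    fderiv ℝ (avg ε k f) y v = avg ε (k + 1) (fun x => fderiv ℝ f x v) y := by
  have hcont : Continuous fun r : ℝ => r ^ (k + 1) • fderiv ℝ f (r • y) :=
    (continuous_pow _).smul
      ((hf.continuous_fderiv one_ne_zero).comp (continuous_id.smul continuous_const))
  rw [(hasFDerivAt_avg hf ε k y).fderiv, _root_.smul_apply,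
    ContinuousLinearMap.intervalIntegral_apply (hcont.intervalIntegrable _ _), avg, smul_eq_mul]
  simp only [_root_.smul_apply, smul_eq_mul, mul_comm]

theorem avg_finset_sum {ι : Type*} (s : Finset ι) {φ : ι → E3 → ℝ}
    (hφ : ∀ i ∈ s, Continuous (φ i)) (ε : ℝ) (k : ℕ) (y : E3) :
    avg ε k (fun x => ∑ i ∈ s, φ i x) y = ∑ i ∈ s, avg ε k (φ i) y := by
  simp only [avg, Finset.sum_mul, ← Finset.mul_sum]
  congr 1
  refine intervalIntegral.integral_finsetSum fun i hi => ?_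
  have := hφ i hi
  exact Continuous.intervalIntegrable (by fun_prop) _ _

theorem avg_succ_fderiv_radial {φ : E3 → ℝ} (hφ : ContDiff ℝ 1 φ) (ε : ℝ) (k : ℕ) {y : E3}
    (h1 : φ y = 0) (h2 : φ ((1 + ε) • y) = 0) :
    avg ε (k + 1) (fun x => fderiv ℝ φ x y) y = -((k + 1) * avg ε k φ y) := by
  have hg : ∀ r : ℝ, HasDerivAt (fun s : ℝ => φ (s • y)) (fderiv ℝ φ (r • y) y) r := fun r =>
    (hφ.differentiable one_ne_zero _).hasFDerivAt.comp_hasDerivAt r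
      (by simpa using (hasDerivAt_id r).smul_const y)
  have hpow : ∀ r : ℝ, HasDerivAt (fun s : ℝ => s ^ (k + 1)) ((k + 1) * r ^ k) r := fun r => by
    simpa using hasDerivAt_pow (k + 1) r
  have hparts := intervalIntegral.integral_mul_deriv_eq_deriv_mul (a := 1) (b := 1 + ε)
    (fun r _ => hpow r) (fun r _ => hg r)
    ((continuous_const.mul (continuous_pow k)).intervalIntegrable _ _)
    ((((hφ.continuous_fderiv one_ne_zero).comp (continuous_id.smul continuous_const)).clm_apply
      continuous_const).intervalIntegrable _ _)
  simp only [one_smul] at hparts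
  rw [h1, h2] at hparts
  simp only [avg]
  rw [intervalIntegral.integral_congr (g := fun r => r ^ (k + 1) * fderiv ℝ φ (r • y) y)
    fun r _ => mul_comm _ _, hparts]
  have hpull : ∫ r in (1 : ℝ)..(1 + ε), (k + 1) * r ^ k * φ (r • y)
      = (k + 1) * ∫ r in (1 : ℝ)..(1 + ε), φ (r • y) * r ^ k := by
    rw [← intervalIntegral.integral_const_mul]
    exact intervalIntegral.integral_congr fun r _ => by ring
  rw [hpull]
  ring

theorem sum_smul_single (y : E3) : ∑ i, y i • EuclideanSpace.single i (1 : ℝ) = y := by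
  ext t
  simp [Pi.single_apply]

theorem sum_proj3_smul_single (y : E3) (j : Fin 3) :
    ∑ i, proj3 y j i • EuclideanSpace.single i (1 : ℝ) = EuclideanSpace.single j 1 - y j • y := by
  ext t
  simp [proj3, sub_smul, Finset.sum_sub_distrib, Pi.single_apply]

theorem sdiv_eq_sum_fderiv {G : E3 → E3} {y : E3} (hy : ‖y‖ = 1)
    (hG : ∀ j, DifferentiableAt ℝ (fun z => G z j) y) :
    sdiv G y = ∑ j, fderiv ℝ (fun z => G z j) y (EuclideanSpace.single j 1 - y j • y) := by
  have hny : ‖y‖⁻¹ • y = y := by rw [hy, inv_one, one_smul]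
  refine Finset.sum_congr rfl fun j _ => ?_
  have hcomp := (HasFDerivAt.comp (g := fun z => G z j) y (by rw [hny]; exact (hG j).hasFDerivAt)
    (hasFDerivAt_inv_norm_smul hy)).fderiv
  have htangent : ⟪y, EuclideanSpace.single j 1 - y j • y⟫ = 0 := by
    simp [inner_sub_right, inner_smul_right, hy, EuclideanSpace.inner_single_right]
  simp only [Function.comp_def] at hcomp
  simp_rw [hcomp, ← smul_eq_mul, ← map_smul, ← map_sum, sum_proj3_smul_single]
  simp [htangent]

theorem sdiv_eq_div3_sub {G : E3 → E3} {y : E3} (hy : ‖y‖ = 1)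
    (hG : ∀ j, DifferentiableAt ℝ (fun z => G z j) y) :
    sdiv G y = div3 G y - ∑ j, y j * fderiv ℝ (fun z => G z j) y y := by
  simp [sdiv_eq_sum_fderiv hy hG, div3, Finset.sum_sub_distrib]

theorem hasFDerivAt_proj3_apply (y : E3) (j m : Fin 3) :
    HasFDerivAt (fun z : E3 => proj3 z j m)
      (-(y j • EuclideanSpace.proj m + y m • EuclideanSpace.proj j : E3 →L[ℝ] ℝ)) y := by
  have h := (hasFDerivAt_const (if j = m then (1 : ℝ) else 0) y).sub
    ((EuclideanSpace.proj j : E3 →L[ℝ] ℝ).hasFDerivAt.mul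
      (EuclideanSpace.proj m : E3 →L[ℝ] ℝ).hasFDerivAt)
  exact h.congr_fderiv (by simp)

theorem sdiv_proj3_mul {G : E3 → E3} {y : E3} (hy : ‖y‖ = 1)
    (hG : ∀ j, DifferentiableAt ℝ (fun z => G z j) y) :
    sdiv (fun z => (WithLp.toLp 2 (fun j => ∑ m, proj3 z j m * G z m) : E3)) y
      = sdiv G y - 2 * ⟪G y, y⟫ := by
  have hF : ∀ j, HasFDerivAt (fun z => ∑ m, proj3 z j m * G z m)
      (∑ m, (proj3 y j m • fderiv ℝ (fun z => G z m) y
        + G y m • -(y j • EuclideanSpace.proj m + y m • EuclideanSpace.proj j))) y :=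
    fun j => HasFDerivAt.fun_sum fun m _ => (hasFDerivAt_proj3_apply y j m).mul (hG m).hasFDerivAt
  rw [sdiv_eq_sum_fderiv hy fun j => (hF j).differentiableAt, sdiv_eq_sum_fderiv hy hG]
  simp only [(hF _).fderiv]
  have hDy : ∀ m, fderiv ℝ (fun z => G z m) y y
      = ∑ i, y i * fderiv ℝ (fun z => G z m) y (EuclideanSpace.single i 1) := fun m => by
    simpa using congrArg (fderiv ℝ (fun z => G z m) y) (sum_smul_single y).symm
  have hy2 : y 0 * y 0 + y 1 * y 1 + y 2 * y 2 = 1 := by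
    have h := EuclideanSpace.norm_sq_eq y
    simp only [hy, Real.norm_eq_abs, sq_abs, Fin.sum_univ_three] at h
    linear_combination -h
  simp only [Fin.sum_univ_three] at hDy
  simp only [proj3, of_apply, neg_add_rev, smul_add, smul_neg, Fin.sum_univ_three, Fin.isValue,
    map_sub, _root_.add_apply, _root_.smul_apply, smul_eq_mul, _root_.neg_apply, PiLp.proj_apply,
    PiLp.single_eq_same, mul_one, PiLp.single_apply, mul_ite, mul_zero, map_smul,
    Finset.sum_sub_distrib, ↓reduceIte, zero_ne_one, zero_sub, neg_mul, one_ne_zero, neg_zero,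
    add_zero, Fin.reduceEq, PiLp.inner_apply, RCLike.inner_apply, Real.ringHom_apply]
  -- after expanding `∂_y G` by `hDy`, what remains is a multiple of `|y|² - 1`
  linear_combination (y 0 * fderiv ℝ (fun z => G z 0) y y + y 1 * fderiv ℝ (fun z => G z 1) y y
      + y 2 * fderiv ℝ (fun z => G z 2) y y + 2 * (G y 0 * y 0 + G y 1 * y 1 + G y 2 * y 2)) * hy2
    + y 0 * hDy 0 + y 1 * hDy 1 + y 2 * hDy 2

theorem avg_const_mul (c : ℝ) (φ : E3 → ℝ) (ε : ℝ) (k : ℕ) (y : E3) :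
    avg ε k (fun x => c * φ x) y = c * avg ε k φ y := by
  simp only [avg, mul_assoc, intervalIntegral.integral_const_mul]
  ring

theorem avg_eq_zero_of_forall_Ioo {φ : E3 → ℝ} {ε : ℝ} (hε : 0 ≤ ε) (k : ℕ) {y : E3}
    (h : ∀ r ∈ Set.Ioo 1 (1 + ε), φ (r • y) = 0) : avg ε k φ y = 0 := by
  rw [avg, intervalIntegral.integral_zero_ae, mul_zero]
  filter_upwards [volume.ae_ne (1 + ε)] with r hr hmem
  rw [Set.uIoc_of_le (by linarith)] at hmem
  rw [h r ⟨hmem.1, lt_of_le_of_ne hmem.2 hr⟩, zero_mul]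

theorem inner_eq_sum_mul (v y : E3) : ⟪v, y⟫ = ∑ j, y j * v j := by
  simp [PiLp.inner_apply]

section AvgV

variable {u : E3 → E3}

theorem differentiableAt_avgV_apply (hu : ContDiff ℝ 1 u) (ε : ℝ) (k : ℕ) (y : E3)
    (j : Fin 3) :
    DifferentiableAt ℝ (fun z => avgV ε k u z j) y :=
  (hasFDerivAt_avg (contDiff_euclidean.mp hu j) ε k y).differentiableAt

theorem inner_avgV (hu : ContDiff ℝ 1 u) (ε : ℝ) (k : ℕ) (y : E3) :
    ⟪avgV ε k u y, y⟫ = avg ε k (fun x => ⟪u x, y⟫) y := by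
  simp_rw [inner_eq_sum_mul]
  rw [avg_finset_sum (φ := fun j x => y j * u x j) _
    fun j _ => continuous_const.mul (contDiff_euclidean.mp hu j).continuous]
  simp_rw [avg_const_mul]
  rfl

theorem div3_avgV (hu : ContDiff ℝ 1 u) (ε : ℝ) (k : ℕ) (y : E3) :
    div3 (avgV ε k u) y = avg ε (k + 1) (div3 u) y := by
  have hcont : ∀ j, Continuous fun x => fderiv ℝ (fun z => u z j) x (EuclideanSpace.single j 1) :=
    fun j => ((contDiff_euclidean.mp hu j).continuous_fderiv one_ne_zero).clm_apply
      continuous_const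
  unfold div3
  rw [avg_finset_sum _ fun j _ => hcont j]
  exact Finset.sum_congr rfl fun j _ => fderiv_avg_apply (contDiff_euclidean.mp hu j) ε k y _

theorem sum_mul_fderiv_avgV_apply (hu : ContDiff ℝ 1 u) (ε : ℝ) (k : ℕ) (y v : E3) :
    ∑ j, y j * fderiv ℝ (fun z => avgV ε k u z j) y v
      = avg ε (k + 1) (fun x => fderiv ℝ (fun x => ⟪u x, y⟫) x v) y := by
  have hinner : ∀ x, HasFDerivAt (fun x => ⟪u x, y⟫)
      (∑ j, y j • fderiv ℝ (fun z => u z j) x) x := fun x => by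
    simp_rw [inner_eq_sum_mul]
    exact HasFDerivAt.fun_sum fun j _ =>
      (((contDiff_euclidean.mp hu j).differentiable one_ne_zero) x).hasFDerivAt.const_mul (y j)
  have hcont : ∀ j, Continuous fun x => y j * fderiv ℝ (fun z => u z j) x v := fun j =>
    continuous_const.mul
      (((contDiff_euclidean.mp hu j).continuous_fderiv one_ne_zero).clm_apply continuous_const)
  simp only [(hinner _).fderiv, _root_.sum_apply, _root_.smul_apply, smul_eq_mul]
  rw [avg_finset_sum (φ := fun j x => y j * fderiv ℝ (fun z => u z j) x v) _ fun j _ => hcont j]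
  simp_rw [avg_const_mul]
  exact Finset.sum_congr rfl fun j _ => by
    rw [← fderiv_avg_apply (contDiff_euclidean.mp hu j)]
    rfl

theorem sdiv_avgV (hu : ContDiff ℝ 1 u) (ε : ℝ) (k : ℕ) {y : E3} (hy : ‖y‖ = 1)
    (h1 : ⟪u y, y⟫ = 0) (h2 : ⟪u ((1 + ε) • y), y⟫ = 0) :
    sdiv (avgV ε k u) y = avg ε (k + 1) (div3 u) y + (k + 1) * avg ε k (fun x => ⟪u x, y⟫) y := by
  rw [sdiv_eq_div3_sub hy (differentiableAt_avgV_apply hu ε k y), div3_avgV hu ε k,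
    sum_mul_fderiv_avgV_apply hu ε k,
    avg_succ_fderiv_radial (hu.inner ℝ contDiff_const) ε k h1 h2]
  ring

end AvgV

theorem stmt18_general (ε : ℝ) (hε0 : 0 < ε) (k : ℕ)
    (u : E3 → E3) (hu : ContDiff ℝ 1 u)
    (hdiv : ∀ x : E3, 1 < ‖x‖ → ‖x‖ < 1 + ε → div3 u x = 0)
    (hb1 : ∀ y : E3, ‖y‖ = 1 → ⟪u y, y⟫ = 0)
    (hb2 : ∀ y : E3, ‖y‖ = 1 → ⟪u ((1+ε) • y), y⟫ = 0)
    (y : E3) (hy : ‖y‖ = 1) :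
    sdiv (fun z => (WithLp.toLp 2 (fun j => ∑ m, proj3 z j m * avgV ε k u z m) : E3)) y
        = ((k : ℝ) - 1) * ((1/ε) * ∫ r in (1:ℝ)..(1+ε), ⟪u (r • y), y⟫ * r ^ k)
    ∧ (k = 1 → sdiv (fun z => (WithLp.toLp 2 (fun j => ∑ m, proj3 z j m * avgV ε k u z m) : E3)) y = 0) := by
  have hdiv_avg : avg ε (k + 1) (div3 u) y = 0 := by
    refine avg_eq_zero_of_forall_Ioo hε0.le (k + 1) fun r hr => ?_
    have hr_norm : ‖r • y‖ = r := by
      rw [norm_smul, hy, mul_one, Real.norm_of_nonneg (by linarith [hr.1])]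
    exact hdiv _ (by rw [hr_norm]; exact hr.1) (by rw [hr_norm]; exact hr.2)
  have hsdiv : sdiv (fun z => (WithLp.toLp 2 (fun j => ∑ m, proj3 z j m * avgV ε k u z m) : E3)) y
      = ((k : ℝ) - 1) * avg ε k (fun x => ⟪u x, y⟫) y := by
    rw [sdiv_proj3_mul hy (differentiableAt_avgV_apply hu ε k y),
      sdiv_avgV hu ε k hy (hb1 y hy) (hb2 y hy), inner_avgV hu ε k, hdiv_avg]
    ring
  exact ⟨hsdiv, fun hk => by rw [hsdiv, hk]; ring⟩

/-- `div_{S²}(M_{ε,τ}^k u) = (k−1) M_ε^k(u·n̄)` on `S²` for solenoidal `u` tangent to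
`∂Ω_ε`; in particular `M_{ε,τ}^1 u` is surface divergence-free. -/
theorem stmt18 (ε : ℝ) (hε0 : 0 < ε) (hε1 : ε < 1) (k : ℕ)
    (u : E3 → E3) (hu : ContDiff ℝ 1 u)
    (hdiv : ∀ x : E3, 1 < ‖x‖ → ‖x‖ < 1 + ε → div3 u x = 0)
    (hb1 : ∀ y : E3, ‖y‖ = 1 → ⟪u y, y⟫ = 0)
    (hb2 : ∀ y : E3, ‖y‖ = 1 → ⟪u ((1+ε) • y), y⟫ = 0)
    (y : E3) (hy : ‖y‖ = 1) :
    sdiv (fun z => (WithLp.toLp 2 (fun j => ∑ m, proj3 z j m * avgV ε k u z m) : E3)) y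
        = ((k : ℝ) - 1) * ((1/ε) * ∫ r in (1:ℝ)..(1+ε), ⟪u (r • y), y⟫ * r ^ k)
    ∧ (k = 1 → sdiv (fun z => (WithLp.toLp 2 (fun j => ∑ m, proj3 z j m * avgV ε k u z m) : E3)) y = 0) :=
  stmt18_general ε hε0 k u hu hdiv hb1 hb2 y hy
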